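/- Let 𝒦 be a separable complex Hilbert space, G a bounded operator on 𝒦, and (L_i)_{i∈I} a finite or countable family of bounded operators on 𝒦 such that Σ_{i∈I} L_i*L_i converges strongly. For any φ ∈ 𝒦 \ {0}, the set ℂ[ℒ]φ is dense in 𝒦 if and only if the set ℂ[G,L]φ is dense in 𝒦, where ℂ[ℒ] denotes the set of polynomials in the operators e^{tG} (t > 0) and L_i (i ∈ I), and ℂ[G,L] denotes the set of polynomials in G and the L_i (i ∈ I). -/

import Mathlib

open scoped ENNReal ComplexInnerProductSpace ComplexOrder
open MeasureTheory ContinuousLinearMap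

noncomputable section

section Core

variable {E : Type*} [NormedAddCommGroup E] [InnerProductSpace ℂ E] [CompleteSpace E]

/-- Trace of a (positive) operator, as a value in `[0,∞]`: supremum over finite
orthonormal families of the sums of diagonal matrix elements. -/
def trENN (A : E →L[ℂ] E) : ℝ≥0∞ :=
  ⨆ (n : ℕ) (e : Fin n → E) (_ : Orthonormal ℂ e),
    ∑ k, ENNReal.ofReal (⟪e k, A (e k)⟫.re)

/-- Trace norm of an operator, as a value in `[0,∞]`: supremum over pairs of finite
orthonormal families of `∑ k |⟪f k, A (e k)⟫|`. -/
def traceNormENN (A : E →L[ℂ] E) : ℝ≥0∞ :=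
  ⨆ (n : ℕ) (e : Fin n → E) (f : Fin n → E) (_ : Orthonormal ℂ e) (_ : Orthonormal ℂ f),
    ∑ k, (‖⟪f k, A (e k)⟫‖₊ : ℝ≥0∞)

/-- A bounded operator is trace class when its trace norm is finite. -/
def IsTraceClass (A : E →L[ℂ] E) : Prop := traceNormENN A < ⊤

/-- `A > 0`: positive definiteness of an operator, `⟪φ, A φ⟫ > 0` for every `φ ≠ 0`. -/
def PosDefOp (A : E →L[ℂ] E) : Prop := ∀ φ : E, φ ≠ 0 → 0 < ⟪φ, A φ⟫

/-- A density matrix: a positive (trace-class) operator with trace one. -/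
def IsDensity (ρ : E →L[ℂ] E) : Prop := ρ.IsPositive ∧ trENN ρ = 1

/-- The trace of an operator computed along a Hilbert basis. -/
def traceAlong {ι : Type} (b : HilbertBasis ι ℂ E) (A : E →L[ℂ] E) : ℂ :=
  ∑' k, ⟪b k, A (b k)⟫

/-- `T` is the semigroup `e^{tL}`: for each `t ≥ 0` and each trace-class `A`, the exponential
series `∑_k (t^k/k!) L^k(A)` converges to `T t A`. -/
def IsExpSemigroup (T : ℝ → (E →L[ℂ] E) → (E →L[ℂ] E))
    (L : (E →L[ℂ] E) → (E →L[ℂ] E)) : Prop :=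
  ∀ t : ℝ, 0 ≤ t → ∀ A : E →L[ℂ] E, IsTraceClass A →
    Filter.Tendsto
      (fun N : ℕ => ∑ k ∈ Finset.range N, (t ^ k / (Nat.factorial k) : ℝ) • L^[k] A)
      Filter.atTop (nhds (T t A))

/-- A semigroup acting on trace-class operators is positivity improving if it maps
every nonzero positive trace-class operator to a positive-definite one at some time `t > 0`. -/
def PositivityImproving (T : ℝ → (E →L[ℂ] E) → (E →L[ℂ] E)) : Prop :=
  ∀ A : E →L[ℂ] E, IsTraceClass A → A.IsPositive → A ≠ 0 →
    ∃ t : ℝ, 0 < t ∧ PosDefOp (T t A)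

/-- `T t` admits no nontrivial subharmonic projection, i.e. no orthogonal projection
`P ∉ {0, 1}` with `T t (P 𝓘₁ P) ⊆ P 𝓘₁ P`. -/
def NoNontrivialSubharmonicProjection (T : ℝ → (E →L[ℂ] E) → (E →L[ℂ] E)) (t : ℝ) : Prop :=
  ¬ ∃ P : E →L[ℂ] E, IsSelfAdjoint P ∧ P ∘L P = P ∧ P ≠ 0 ∧ P ≠ 1 ∧
      ∀ A : E →L[ℂ] E, IsTraceClass A → P ∘L T t (P ∘L A ∘L P) ∘L P = T t (P ∘L A ∘L P)

/-- The simplex `{0 < t_1 < ⋯ < t_n < t}`. -/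
def simplexT (n : ℕ) (t : ℝ) : Set (Fin n → ℝ) :=
  {s | StrictMono s ∧ ∀ k, 0 < s k ∧ s k < t}

/-- The unbounded simplex `{0 < t_1 < ⋯ < t_n < ∞}`. -/
def simplexInf (n : ℕ) : Set (Fin n → ℝ) :=
  {s | StrictMono s ∧ ∀ k, 0 < s k}

end Core

section QMS

variable {K : Type*} [NormedAddCommGroup K] [InnerProductSpace ℂ K] [CompleteSpace K]
variable {I : Type} [Countable I]

/-- Strong convergence of `∑ᵢ (L i)* (L i)` to the operator `S`. -/
def StrongSum (L : I → K →L[ℂ] K) (S : K →L[ℂ] K) : Prop :=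
  ∀ φ : K, HasSum (fun i => adjoint (L i) (L i φ)) (S φ)

/-- The operator `G = -iH - (1/2) ∑ᵢ (L i)* (L i)`. -/
def Gop (H S : K →L[ℂ] K) : K →L[ℂ] K := (-Complex.I) • H - (2⁻¹ : ℂ) • S

/-- The Lindblad generator `𝓛(μ) = G μ + μ G* + ∑ᵢ Lᵢ μ Lᵢ*`. -/
def Lind (G : K →L[ℂ] K) (L : I → K →L[ℂ] K) (μ : K →L[ℂ] K) : K →L[ℂ] K :=
  G ∘L μ + μ ∘L adjoint G + ∑' i, L i ∘L μ ∘L adjoint (L i)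

/-- `ζ_t(ξ) = e^{(t-t_n)G} L_{i_n} e^{(t_n - t_{n-1})G} ⋯ L_{i_1} e^{t_1 G}` for
`ξ = (i_1, …, i_n; t_1, …, t_n)`. -/
def zeta (G : K →L[ℂ] K) (L : I → K →L[ℂ] K) :
    (n : ℕ) → (Fin n → I) → (Fin n → ℝ) → ℝ → (K →L[ℂ] K)
  | 0, _, _, t => NormedSpace.exp (t • G)
  | n + 1, idx, s, t =>
      NormedSpace.exp ((t - s (Fin.last n)) • G) ∘L L (idx (Fin.last n)) ∘L
        zeta G L n (idx ∘ Fin.castSucc) (s ∘ Fin.castSucc) (s (Fin.last n))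

/-- The generating set `{e^{tG} : t > 0} ∪ {L i}` of the algebra `ℂ[𝓛]`. -/
def expGenSet (G : K →L[ℂ] K) (L : I → K →L[ℂ] K) : Set (K →L[ℂ] K) :=
  {B | ∃ t : ℝ, 0 < t ∧ B = NormedSpace.exp (t • G)} ∪ Set.range L

/-- The generating set `{G} ∪ {L i}` of the algebra `ℂ[G, L]`. -/
def genSet (G : K →L[ℂ] K) (L : I → K →L[ℂ] K) : Set (K →L[ℂ] K) :=
  {G} ∪ Set.range L

/-- The orbit of the vector `φ` under the algebra of (noncommutative) polynomials in the
operators of `S` is dense. -/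
def DenseOrbit (S : Set (K →L[ℂ] K)) (φ : K) : Prop :=
  Dense {ψ : K | ∃ B ∈ Algebra.adjoin ℂ S, ψ = B φ}

end QMS

/-! The closures of the two orbits are closed subspaces, and each is invariant under the
generators of the other algebra. The operators leaving a closed subspace invariant form a
norm-closed subalgebra, so it contains `e^{tG} = ∑ (tG)^k / k!` as soon as it contains `G`, and
it contains `G = lim_{t → 0⁺} (e^{tG} - 1) / t` as soon as it contains every `e^{tG}`, `t > 0`. -/

theorem mem_of_forall_exp_smul_mem {𝔸 : Type*} [NormedRing 𝔸] [NormedAlgebra ℝ 𝔸]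
    [CompleteSpace 𝔸] {s : Submodule ℝ 𝔸} (hs : IsClosed (s : Set 𝔸)) (h1 : 1 ∈ s) {x : 𝔸}
    (hx : ∀ t : ℝ, 0 < t → NormedSpace.exp (t • x) ∈ s) : x ∈ s := by
  have hderiv : HasDerivAt (fun t : ℝ => NormedSpace.exp (t • x)) x 0 := by
    simpa using hasDerivAt_exp_smul_const x (0 : ℝ)
  have hslope : Filter.Tendsto (slope (fun t : ℝ => NormedSpace.exp (t • x)) 0)
      (nhdsWithin 0 (Set.Ioi 0)) (nhds x) :=
    hasDerivAt_iff_tendsto_slope.mp hderiv |>.mono_left <|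
      nhdsWithin_mono 0 fun _ ht => ne_of_gt ht
  refine hs.mem_of_tendsto hslope <| eventually_nhdsWithin_of_forall fun t ht => ?_
  rw [slope_def_module, sub_zero, zero_smul, NormedSpace.exp_zero]
  exact s.smul_mem _ (s.sub_mem (hx t ht) h1)

section InvariantOps

variable {K : Type*} [NormedAddCommGroup K] [NormedSpace ℂ K]

def Submodule.invariantOps (M : Submodule ℂ K) : Subalgebra ℂ (K →L[ℂ] K) where
  carrier := {B | ∀ ψ ∈ M, B ψ ∈ M}
  mul_mem' hA hB ψ hψ := hA _ (hB ψ hψ)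
  add_mem' hA hB ψ hψ := M.add_mem (hA ψ hψ) (hB ψ hψ)
  algebraMap_mem' c ψ hψ := by
    simpa [Algebra.algebraMap_eq_smul_one] using M.smul_mem c hψ

theorem Submodule.mem_invariantOps {M : Submodule ℂ K} {B : K →L[ℂ] K} :
    B ∈ M.invariantOps ↔ ∀ ψ ∈ M, B ψ ∈ M := Iff.rfl

theorem Submodule.isClosed_invariantOps {M : Submodule ℂ K} (hM : IsClosed (M : Set K)) :
    IsClosed (M.invariantOps : Set (K →L[ℂ] K)) := by
  have : (M.invariantOps : Set (K →L[ℂ] K)) = ⋂ ψ ∈ M, (fun B : K →L[ℂ] K => B ψ) ⁻¹' M := by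
    ext B; simp [Submodule.mem_invariantOps]
  rw [this]
  exact isClosed_biInter fun ψ _ => hM.preimage (ContinuousLinearMap.apply ℂ K ψ).continuous

theorem Submodule.invariantOps_le_invariantOps_topologicalClosure (M : Submodule ℂ K) :
    M.invariantOps ≤ M.topologicalClosure.invariantOps := fun B hB _ hψ =>
  map_mem_closure B.continuous hψ hB

theorem Submodule.exp_smul_mem_invariantOps {M : Submodule ℂ K} (hM : IsClosed (M : Set K))
    {G : K →L[ℂ] K} (hG : G ∈ M.invariantOps) (t : ℝ) :
    NormedSpace.exp (t • G) ∈ M.invariantOps := by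
  have htG : t • G ∈ M.invariantOps := by
    simpa only [Complex.coe_smul] using M.invariantOps.smul_mem hG (t : ℂ)
  rw [NormedSpace.exp_eq_tsum ℂ]
  exact tsum_mem (isClosed_invariantOps hM) fun n => Subalgebra.smul_mem _ (pow_mem htG n) _

variable [CompleteSpace K] in
theorem Submodule.mem_invariantOps_of_forall_exp_smul_mem {M : Submodule ℂ K}
    (hM : IsClosed (M : Set K)) {G : K →L[ℂ] K}
    (hG : ∀ t : ℝ, 0 < t → NormedSpace.exp (t • G) ∈ M.invariantOps) :
    G ∈ M.invariantOps :=
  mem_of_forall_exp_smul_mem (s := M.invariantOps.toSubmodule.restrictScalars ℝ)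
    (isClosed_invariantOps hM) M.invariantOps.one_mem hG

def adjoinOrbit (S : Set (K →L[ℂ] K)) (φ : K) : Submodule ℂ K where
  carrier := {ψ | ∃ B ∈ Algebra.adjoin ℂ S, ψ = B φ}
  zero_mem' := ⟨0, zero_mem _, rfl⟩
  add_mem' := by
    rintro _ _ ⟨A, hA, rfl⟩ ⟨B, hB, rfl⟩
    exact ⟨A + B, add_mem hA hB, rfl⟩
  smul_mem' := by
    rintro c _ ⟨A, hA, rfl⟩
    exact ⟨c • A, Subalgebra.smul_mem _ hA c, rfl⟩

theorem mem_closure_adjoinOrbit_self (S : Set (K →L[ℂ] K)) (φ : K) :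
    φ ∈ (adjoinOrbit S φ).topologicalClosure :=
  subset_closure ⟨1, one_mem _, rfl⟩

theorem adjoin_le_invariantOps_closure_adjoinOrbit (S : Set (K →L[ℂ] K)) (φ : K) :
    Algebra.adjoin ℂ S ≤ (adjoinOrbit S φ).topologicalClosure.invariantOps := by
  refine le_trans ?_ (adjoinOrbit S φ).invariantOps_le_invariantOps_topologicalClosure
  rintro B hB _ ⟨C, hC, rfl⟩
  exact ⟨B * C, mul_mem hB hC, rfl⟩

theorem closure_adjoinOrbit_le {S₁ S₂ : Set (K →L[ℂ] K)} {φ : K}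
    (h : S₁ ⊆ (adjoinOrbit S₂ φ).topologicalClosure.invariantOps) :
    (adjoinOrbit S₁ φ).topologicalClosure ≤ (adjoinOrbit S₂ φ).topologicalClosure := by
  refine Submodule.topologicalClosure_minimal _ ?_ (Submodule.isClosed_topologicalClosure _)
  rintro _ ⟨B, hB, rfl⟩
  exact Algebra.adjoin_le h hB φ (mem_closure_adjoinOrbit_self S₂ φ)

end InvariantOps

theorem denseOrbit_iff {K : Type*} [NormedAddCommGroup K] [InnerProductSpace ℂ K]
    (S : Set (K →L[ℂ] K)) (φ : K) :
    DenseOrbit S φ ↔ (adjoinOrbit S φ).topologicalClosure = ⊤ :=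
  Submodule.dense_iff_topologicalClosure_eq_top (s := adjoinOrbit S φ)

theorem denseOrbit_exp_iff_denseOrbit_gen_general
    {K : Type*} [NormedAddCommGroup K] [InnerProductSpace ℂ K] [CompleteSpace K]
    {I : Type}
    (G : K →L[ℂ] K) (L : I → K →L[ℂ] K)
    (φ : K) :
    DenseOrbit (expGenSet G L) φ ↔ DenseOrbit (genSet G L) φ := by
  set Mexp := (adjoinOrbit (expGenSet G L) φ).topologicalClosure
  set Mgen := (adjoinOrbit (genSet G L) φ).topologicalClosure
  have hexp := adjoin_le_invariantOps_closure_adjoinOrbit (expGenSet G L) φ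
  have hgen := adjoin_le_invariantOps_closure_adjoinOrbit (genSet G L) φ
  have hMeq : Mexp = Mgen := by
    refine le_antisymm (closure_adjoinOrbit_le ?_) (closure_adjoinOrbit_le ?_)
    · rintro _ (⟨t, -, rfl⟩ | ⟨i, rfl⟩)
      · exact Submodule.exp_smul_mem_invariantOps (Submodule.isClosed_topologicalClosure _)
          (hgen (Algebra.subset_adjoin (Or.inl rfl))) t
      · exact hgen (Algebra.subset_adjoin (Or.inr ⟨i, rfl⟩))
    · rintro _ (rfl | ⟨i, rfl⟩)
      · exact Submodule.mem_invariantOps_of_forall_exp_smul_mem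
          (Submodule.isClosed_topologicalClosure _)
          fun t ht => hexp (Algebra.subset_adjoin (Or.inl ⟨t, ht, rfl⟩))
      · exact hexp (Algebra.subset_adjoin (Or.inr ⟨i, rfl⟩))
  rw [denseOrbit_iff, denseOrbit_iff]
  change Mexp = ⊤ ↔ Mgen = ⊤
  rw [hMeq]

/-- For bounded `G` and `(Lᵢ)` with `∑ᵢ Lᵢ*Lᵢ` strongly convergent, and any `φ ≠ 0`, the
set `ℂ[𝓛]φ` (polynomials in `e^{tG}`, `t > 0`, and the `Lᵢ`, applied to `φ`) is dense iff the
set `ℂ[G,L]φ` (polynomials in `G` and the `Lᵢ`, applied to `φ`) is dense. -/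
theorem denseOrbit_exp_iff_denseOrbit_gen
    {K : Type*} [NormedAddCommGroup K] [InnerProductSpace ℂ K] [CompleteSpace K]
    [TopologicalSpace.SeparableSpace K] {I : Type} [Countable I]
    (G : K →L[ℂ] K) (L : I → K →L[ℂ] K) (S : K →L[ℂ] K) (hS : StrongSum L S)
    (φ : K) (hφ : φ ≠ 0) :
    DenseOrbit (expGenSet G L) φ ↔ DenseOrbit (genSet G L) φ :=
  denseOrbit_exp_iff_denseOrbit_gen_general G L φ
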